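/- arXiv:2003.10522 — 3 statements merged into one kernel-verified Lean document; each statement's English description precedes it below -/
import Mathlib

section
/- Under the splitting assumptions (A SPD, S SPD, B, C full row rank, 2S ≻ BA⁻¹Bᵀ), every eigenvalue of 𝒢 = 𝒫⁻¹ℛ is real and every nonzero eigenvalue λ has the form λ = 1 - (y* B A⁻¹ Bᵀ y)/(y* S y) for some nonzero y ∈ null(C). -/
/-!
Multiplying `𝒢 v = μ v` by `𝒫` turns it into `ℛ v = μ 𝒫 v`. For `v = (x, y, z)` and `μ ≠ 0`
the first and last block rows give `A x = -Bᵀ y` and `C y = 0`; pairing the middle row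
`B x + S y = μ (S y - Cᵀ z)` with `y*` kills the `Cᵀ z` term, since `y* Cᵀ = (C ȳ)ᵀ = 0`, and
leaves `y* S y - y* B A⁻¹ Bᵀ y = μ y* S y`. If `y = 0` then `x = 0` and `Cᵀ z = 0`, so `v = 0`;
hence `y* S y > 0`, and as both quadratic forms are real, so is `μ`. The same pairing shows
that `𝒫` is nonsingular. Everything is done over `ℂ` for the complexified matrices.
-/

open Matrix

noncomputable section

/-- 3×3 block matrix with blocks of sizes n, m, l. -/
def blk3 {n m l : ℕ} (M11 : Matrix (Fin n) (Fin n) ℝ) (M12 : Matrix (Fin n) (Fin m) ℝ)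
    (M13 : Matrix (Fin n) (Fin l) ℝ) (M21 : Matrix (Fin m) (Fin n) ℝ)
    (M22 : Matrix (Fin m) (Fin m) ℝ) (M23 : Matrix (Fin m) (Fin l) ℝ)
    (M31 : Matrix (Fin l) (Fin n) ℝ) (M32 : Matrix (Fin l) (Fin m) ℝ)
    (M33 : Matrix (Fin l) (Fin l) ℝ) :
    Matrix (Fin n ⊕ (Fin m ⊕ Fin l)) (Fin n ⊕ (Fin m ⊕ Fin l)) ℝ :=
  fromBlocks M11 (fromCols M12 M13) (fromRows M21 M31) (fromBlocks M22 M23 M32 M33)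

/-- μ ∈ ℂ is an eigenvalue of the real matrix M (viewed over ℂ). -/
def IsEig {k : Type*} [Fintype k] (M : Matrix k k ℝ) (μ : ℂ) : Prop :=
  ∃ v : k → ℂ, v ≠ 0 ∧ (M.map (fun x : ℝ => (x : ℂ))) *ᵥ v = μ • v

open scoped ComplexOrder

lemma exists_eq_sumElim_sumElim {α β γ δ : Type*} (v : α ⊕ (β ⊕ γ) → δ) :
    ∃ x y z, v = Sum.elim x (Sum.elim y z) :=
  ⟨_, _, _, by rw [Sum.elim_comp_inl_inr, Sum.elim_comp_inl_inr]⟩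

theorem Sum.smul_elim {α β R M : Type*} [SMul R M] (c : R) (a : α → M) (b : β → M) :
    c • Sum.elim a b = Sum.elim (c • a) (c • b) :=
  funext (Sum.rec (fun _ => rfl) fun _ => rfl)

lemma Matrix.mulVec_injective_of_rank_eq_card {K m n : Type*} [Field K] [Fintype n]
    {M : Matrix m n K} (h : M.rank = Fintype.card n) : Function.Injective M.mulVec := by
  have := M.mulVecLin.finrank_range_add_finrank_ker
  rw [← rank, h, Module.finrank_fintype_fun_eq_card] at this
  have hker : Module.finrank K (LinearMap.ker M.mulVecLin) = 0 := by omega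
  exact LinearMap.ker_eq_bot.mp (Submodule.finrank_eq_zero.mp hker)

namespace Matrix

variable {𝕜 n m l : Type*} [RCLike 𝕜] [Fintype n] [Fintype m] [Fintype l]

/-- `splittingP A B S C - splittingR B S` is the double saddle point matrix
`[[A, Bᴴ, 0], [-B, 0, -Cᴴ], [0, C, 0]]`. -/
def splittingP (A : Matrix n n 𝕜) (B : Matrix m n 𝕜) (S : Matrix m m 𝕜) (C : Matrix l m 𝕜) :
    Matrix (n ⊕ (m ⊕ l)) (n ⊕ (m ⊕ l)) 𝕜 :=
  fromBlocks A (fromCols Bᴴ 0) 0 (fromBlocks S (-Cᴴ) C 0)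

def splittingR (B : Matrix m n 𝕜) (S : Matrix m m 𝕜) : Matrix (n ⊕ (m ⊕ l)) (n ⊕ (m ⊕ l)) 𝕜 :=
  fromBlocks 0 0 (fromRows B 0) (fromBlocks S 0 0 0)

lemma splittingP_mulVec (A : Matrix n n 𝕜) (B : Matrix m n 𝕜) (S : Matrix m m 𝕜)
    (C : Matrix l m 𝕜) (x : n → 𝕜) (y : m → 𝕜) (z : l → 𝕜) :
    splittingP A B S C *ᵥ Sum.elim x (Sum.elim y z) =
      Sum.elim (A *ᵥ x + Bᴴ *ᵥ y) (Sum.elim (S *ᵥ y - Cᴴ *ᵥ z) (C *ᵥ y)) := by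
  simp [splittingP, fromBlocks_mulVec, fromCols_mulVec, sub_eq_add_neg, neg_mulVec]

lemma splittingR_mulVec (B : Matrix m n 𝕜) (S : Matrix m m 𝕜) (x : n → 𝕜) (y : m → 𝕜)
    (z : l → 𝕜) :
    splittingR B S *ᵥ Sum.elim x (Sum.elim y z) =
      Sum.elim (0 : n → 𝕜) (Sum.elim (B *ᵥ x + S *ᵥ y) (0 : l → 𝕜)) := by
  simp [splittingR, fromBlocks_mulVec, fromRows_mulVec, ← Sum.elim_add_add]

lemma star_dotProduct_conjTranspose_mulVec_eq_zero {C : Matrix l m 𝕜} {y : m → 𝕜}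
    (hy : C *ᵥ y = 0) (z : l → 𝕜) : star y ⬝ᵥ Cᴴ *ᵥ z = 0 := by
  rw [dotProduct_mulVec, ← star_mulVec, hy, star_zero, zero_dotProduct]

variable [DecidableEq n] {A : Matrix n n 𝕜} {B : Matrix m n 𝕜} {S : Matrix m m 𝕜} {C : Matrix l m 𝕜}

lemma splittingP_mulVec_injective (hA : A.PosDef) (hS : S.PosDef)
    (hC : Function.Injective Cᴴ.mulVec) : Function.Injective (splittingP A B S C).mulVec := by
  refine (injective_iff_map_eq_zero (splittingP A B S C).mulVecLin).mpr fun v hv => ?_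
  obtain ⟨x, y, z, rfl⟩ := exists_eq_sumElim_sumElim v
  simp only [mulVecLin_apply, splittingP_mulVec, ← Sum.elim_zero_zero, Sum.elim_eq_iff,
    sub_eq_zero] at hv ⊢
  obtain ⟨hxy, hyz, hy⟩ := hv
  have hy0 : y = 0 := by
    by_contra hy0
    have := hS.dotProduct_mulVec_pos hy0
    rw [hyz, star_dotProduct_conjTranspose_mulVec_eq_zero hy] at this
    exact this.false
  subst hy0
  exact ⟨mulVec_injective_iff_isUnit.mpr hA.isUnit (by simpa using hxy), rfl,
    hC (by simpa using hyz.symm)⟩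

lemma eq_one_sub_div_of_splitting_eq (hA : IsUnit A) {μ : 𝕜} {x : n → 𝕜} {y : m → 𝕜}
    {z : l → 𝕜} (h₁ : A *ᵥ x + Bᴴ *ᵥ y = 0) (h₂ : B *ᵥ x + S *ᵥ y = μ • (S *ᵥ y - Cᴴ *ᵥ z))
    (h₃ : C *ᵥ y = 0) (hS : star y ⬝ᵥ S *ᵥ y ≠ 0) :
    μ = 1 - star y ⬝ᵥ (B * A⁻¹ * Bᴴ) *ᵥ y / star y ⬝ᵥ S *ᵥ y := by
  have hx : x = -(A⁻¹ *ᵥ Bᴴ *ᵥ y) := by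
    rw [← mulVec_neg, ← eq_neg_of_add_eq_zero_left h₁, mulVec_mulVec,
      nonsing_inv_mul _ ((isUnit_iff_isUnit_det A).mp hA), one_mulVec]
  have key := congrArg (star y ⬝ᵥ ·) h₂
  simp only [dotProduct_add, dotProduct_smul, dotProduct_sub,
    star_dotProduct_conjTranspose_mulVec_eq_zero h₃, hx, mulVec_neg, dotProduct_neg,
    mulVec_mulVec, ← Matrix.mul_assoc, smul_eq_mul, sub_zero] at key
  rw [eq_sub_iff_add_eq, ← eq_sub_iff_add_eq', div_eq_iff hS]
  linear_combination -key

omit [DecidableEq n] in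
lemma IsHermitian.im_star_dotProduct_mulVec_div {M N : Matrix m m 𝕜} (hM : M.IsHermitian)
    (hN : N.IsHermitian) (y : m → 𝕜) :
    RCLike.im (star y ⬝ᵥ M *ᵥ y / star y ⬝ᵥ N *ᵥ y) = 0 := by
  simp [RCLike.div_im, hM.im_star_dotProduct_mulVec_self, hN.im_star_dotProduct_mulVec_self]

theorem exists_eq_one_sub_div_of_splittingR_mulVec_eq (hA : A.PosDef) (hS : S.PosDef)
    (hC : Function.Injective Cᴴ.mulVec) {μ : 𝕜} (hμ : μ ≠ 0) {v : n ⊕ (m ⊕ l) → 𝕜}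
    (hv : v ≠ 0) (h : splittingR B S *ᵥ v = μ • splittingP A B S C *ᵥ v) :
    ∃ y, y ≠ 0 ∧ C *ᵥ y = 0 ∧ μ = 1 - star y ⬝ᵥ (B * A⁻¹ * Bᴴ) *ᵥ y / star y ⬝ᵥ S *ᵥ y := by
  obtain ⟨x, y, z, rfl⟩ := exists_eq_sumElim_sumElim v
  simp only [splittingR_mulVec, splittingP_mulVec, Sum.smul_elim, Sum.elim_eq_iff] at h
  obtain ⟨h₁, h₂, h₃⟩ := h
  rw [eq_comm, smul_eq_zero_iff_right hμ] at h₁ h₃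
  have hy : y ≠ 0 := by
    rintro rfl
    have hx : x = 0 := mulVec_injective_iff_isUnit.mpr hA.isUnit (by simpa using h₁)
    have hz : z = 0 := hC (by simpa [hx, hμ] using h₂)
    exact hv (by simp [hx, hz])
  exact ⟨y, hy, h₃, eq_one_sub_div_of_splitting_eq hA.isUnit h₁ h₂ h₃
    (hS.dotProduct_mulVec_pos hy).ne'⟩

section Complexification

variable {n m l : Type*}

lemma map_ofReal_transpose (M : Matrix m n ℝ) :
    Mᵀ.map Complex.ofReal = (M.map Complex.ofReal)ᴴ := by
  ext
  simp

variable [Fintype n]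

lemma re_star_dotProduct_map_ofReal_mulVec (M : Matrix n n ℝ) (z : n → ℂ) :
    (star z ⬝ᵥ M.map Complex.ofReal *ᵥ z).re =
      (fun i => (z i).re) ⬝ᵥ M *ᵥ (fun i => (z i).re) +
        (fun i => (z i).im) ⬝ᵥ M *ᵥ (fun i => (z i).im) := by
  simp only [dotProduct, mulVec, map_apply, Pi.star_apply, Complex.star_def, Finset.mul_sum,
    Complex.re_sum, ← Finset.sum_add_distrib]
  refine Finset.sum_congr rfl fun j _ => Finset.sum_congr rfl fun i _ => ?_
  simp only [Complex.mul_re, Complex.conj_re, Complex.conj_im, Complex.mul_im, Complex.ofReal_re,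
    Complex.ofReal_im]
  ring

lemma PosDef.map_ofReal {M : Matrix n n ℝ} (hM : M.PosDef) : (M.map Complex.ofReal).PosDef := by
  have hH : (M.map Complex.ofReal).IsHermitian :=
    hM.isHermitian.map _ fun r => (Complex.conj_ofReal r).symm
  refine .of_dotProduct_mulVec_pos hH fun z hz => Complex.pos_iff.mpr
    ⟨?_, (hH.im_star_dotProduct_mulVec_self z).symm⟩
  rw [re_star_dotProduct_map_ofReal_mulVec]
  have hre := hM.posSemidef.dotProduct_mulVec_nonneg fun i => (z i).re
  have him := hM.posSemidef.dotProduct_mulVec_nonneg fun i => (z i).im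
  simp only [star_trivial] at hre him
  obtain h | h : (fun i => (z i).re) ≠ 0 ∨ (fun i => (z i).im) ≠ 0 := by
    by_contra! h
    exact hz (funext fun i => Complex.ext (congrFun h.1 i) (congrFun h.2 i))
  · have := hM.dotProduct_mulVec_pos h
    simp only [star_trivial] at this
    linarith
  · have := hM.dotProduct_mulVec_pos h
    simp only [star_trivial] at this
    linarith

lemma map_ofReal_mul (M : Matrix m n ℝ) (N : Matrix n l ℝ) :
    (M * N).map Complex.ofReal = M.map Complex.ofReal * N.map Complex.ofReal :=
  Matrix.map_mul (f := Complex.ofRealHom)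

variable [DecidableEq n]

lemma map_ofReal_inv {M : Matrix n n ℝ} (hM : IsUnit M) :
    M⁻¹.map Complex.ofReal = (M.map Complex.ofReal)⁻¹ := by
  refine (inv_eq_left_inv ?_).symm
  rw [← map_ofReal_mul, nonsing_inv_mul _ ((isUnit_iff_isUnit_det M).mp hM)]
  simp

lemma isUnit_of_isUnit_map_ofReal {M : Matrix n n ℝ} (h : IsUnit (M.map Complex.ofReal)) :
    IsUnit M := by
  have hdet : (M.map Complex.ofReal).det = (M.det : ℂ) := (Complex.ofRealHom.map_det M).symm
  rw [isUnit_iff_isUnit_det, hdet] at h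
  simpa [isUnit_iff_isUnit_det, isUnit_iff_ne_zero] using h

omit [Fintype n] [DecidableEq n] in
lemma conjTranspose_map_ofReal_mulVec_injective [Fintype m] [Fintype l]
    [DecidableEq l] {C : Matrix l m ℝ} (hC : C.rank = Fintype.card l) :
    Function.Injective (C.map Complex.ofReal)ᴴ.mulVec := by
  have hCt : Function.Injective C.vecMul := fun a b hab =>
    mulVec_injective_of_rank_eq_card (M := Cᵀ) (by rwa [rank_transpose])
      (by simpa [mulVec_transpose])
  have hCCt : (C * Cᵀ).PosDef := by
    simpa [conjTranspose_eq_transpose_of_trivial] using PosDef.mul_conjTranspose_self C hCt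
  have h := mulVec_injective_iff_isUnit.mpr hCCt.map_ofReal.isUnit
  rw [map_ofReal_mul, map_ofReal_transpose] at h
  exact Function.Injective.of_comp (f := (C.map Complex.ofReal).mulVec)
    fun a b hab => h (by simpa [mulVec_mulVec] using hab)

end Complexification

end Matrix

lemma IsEig.exists_mulVec_eq_smul_mulVec {k : Type*} [Fintype k] [DecidableEq k]
    {P R : Matrix k k ℝ} (hP : IsUnit P) {μ : ℂ} (h : IsEig (P⁻¹ * R) μ) :
    ∃ v, v ≠ 0 ∧ R.map Complex.ofReal *ᵥ v = μ • P.map Complex.ofReal *ᵥ v := by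
  obtain ⟨v, hv0, hv⟩ := h
  refine ⟨v, hv0, ?_⟩
  rw [← mulVec_smul, ← hv, mulVec_mulVec, ← map_ofReal_mul, ← Matrix.mul_assoc,
    mul_nonsing_inv _ ((isUnit_iff_isUnit_det _).mp hP), Matrix.one_mul]

lemma map_blk3_eq_splittingP {n m l : ℕ} (A : Matrix (Fin n) (Fin n) ℝ)
    (B : Matrix (Fin m) (Fin n) ℝ) (S : Matrix (Fin m) (Fin m) ℝ) (C : Matrix (Fin l) (Fin m) ℝ) :
    (blk3 A Bᵀ 0 0 S (-Cᵀ) 0 C 0).map Complex.ofReal =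
      splittingP (A.map Complex.ofReal) (B.map Complex.ofReal) (S.map Complex.ofReal)
        (C.map Complex.ofReal) := by
  ext (i | i | i) (j | j | j) <;> simp [blk3, splittingP]

lemma map_blk3_eq_splittingR {n m l : ℕ} (B : Matrix (Fin m) (Fin n) ℝ)
    (S : Matrix (Fin m) (Fin m) ℝ) :
    (blk3 0 0 0 B S 0 0 0 (0 : Matrix (Fin l) (Fin l) ℝ)).map Complex.ofReal =
      splittingR (B.map Complex.ofReal) (S.map Complex.ofReal) := by
  ext (i | i | i) (j | j | j) <;> simp [blk3, splittingR]

theorem stmt5_general {n m l : ℕ} (A : Matrix (Fin n) (Fin n) ℝ) (B : Matrix (Fin m) (Fin n) ℝ)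
    (S : Matrix (Fin m) (Fin m) ℝ) (C : Matrix (Fin l) (Fin m) ℝ)
    (hA : A.PosDef) (hS : S.PosDef) (hC : C.rank = l) :
    ∀ μ : ℂ, IsEig ((blk3 A Bᵀ 0 0 S (-Cᵀ) 0 C 0)⁻¹ * blk3 0 0 0 B S 0 0 0 0) μ →
      μ.im = 0 ∧ (μ ≠ 0 → ∃ y : Fin m → ℂ, y ≠ 0 ∧
        (C.map (fun x : ℝ => (x : ℂ))) *ᵥ y = 0 ∧
        μ = 1 - (star y ⬝ᵥ ((B * A⁻¹ * Bᵀ).map (fun x : ℝ => (x : ℂ)) *ᵥ y)) /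
                (star y ⬝ᵥ (S.map (fun x : ℝ => (x : ℂ)) *ᵥ y))) := by
  intro μ hμ_eig
  have hA' := hA.map_ofReal
  have hS' := hS.map_ofReal
  have hC' := conjTranspose_map_ofReal_mulVec_injective (C := C) (by simpa using hC)
  have hP : IsUnit (blk3 A Bᵀ 0 0 S (-Cᵀ) 0 C 0) := isUnit_of_isUnit_map_ofReal <| by
    rw [map_blk3_eq_splittingP]
    exact mulVec_injective_iff_isUnit.mp (splittingP_mulVec_injective hA' hS' hC')
  obtain ⟨v, hv0, heig⟩ := hμ_eig.exists_mulVec_eq_smul_mulVec hP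
  rw [map_blk3_eq_splittingP, map_blk3_eq_splittingR] at heig
  rcases eq_or_ne μ 0 with rfl | hμ
  · simp
  obtain ⟨y, hy, hCy, hμy⟩ :=
    exists_eq_one_sub_div_of_splittingR_mulVec_eq hA' hS' hC' hμ hv0 heig
  have hBAB : (B * A⁻¹ * Bᵀ).map Complex.ofReal =
      B.map Complex.ofReal * (A.map Complex.ofReal)⁻¹ * (B.map Complex.ofReal)ᴴ := by
    rw [map_ofReal_mul, map_ofReal_mul, map_ofReal_inv hA.isUnit, map_ofReal_transpose]
  refine ⟨?_, fun _ => ⟨y, hy, hCy, by rwa [hBAB]⟩⟩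
  have := (isHermitian_mul_mul_conjTranspose (B.map Complex.ofReal) hA'.isHermitian.inv
    ).im_star_dotProduct_mulVec_div hS'.isHermitian y
  simpa [hμy] using this

theorem stmt5 {n m l : ℕ} (A : Matrix (Fin n) (Fin n) ℝ) (B : Matrix (Fin m) (Fin n) ℝ)
    (S : Matrix (Fin m) (Fin m) ℝ) (C : Matrix (Fin l) (Fin m) ℝ)
    (hA : A.PosDef) (hS : S.PosDef) (hB : B.rank = m) (hC : C.rank = l)
    (h2 : ((2 : ℝ) • S - B * A⁻¹ * Bᵀ).PosDef) :
    ∀ μ : ℂ, IsEig ((blk3 A Bᵀ 0 0 S (-Cᵀ) 0 C 0)⁻¹ * blk3 0 0 0 B S 0 0 0 0) μ →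
      μ.im = 0 ∧ (μ ≠ 0 → ∃ y : Fin m → ℂ, y ≠ 0 ∧
        (C.map (fun x : ℝ => (x : ℂ))) *ᵥ y = 0 ∧
        μ = 1 - (star y ⬝ᵥ ((B * A⁻¹ * Bᵀ).map (fun x : ℝ => (x : ℂ)) *ᵥ y)) /
                (star y ⬝ᵥ (S.map (fun x : ℝ => (x : ℂ)) *ᵥ y))) :=
  stmt5_general A B S C hA hS hC
end
end

section
/- For every x ∈ ℝⁿ and z ∈ ℂˡ not both zero, the vector (x; -S⁻¹Bx; z) is an eigenvector of 𝒫⁻¹ℬ corresponding to eigenvalue 1; in particular, 1 is an eigenvalue of 𝒫⁻¹ℬ of algebraic multiplicity at least n + l. -/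
open Matrix

noncomputable section

/-! The difference `ℬ - 𝒫` vanishes outside its middle block row `(-B, -S, 0)`, which annihilates
`(x; -S⁻¹Bx; z)`; so `𝒫⁻¹ℬ` fixes these vectors as soon as `𝒫` is invertible. Block elimination
gives `det 𝒫 = det A · det S · det (C S⁻¹ Cᵀ)`, and `C S⁻¹ Cᵀ` is positive definite because `C` has
full row rank. The fixed vectors form an `(n + l)`-dimensional subspace of the eigenspace for `1`,
and the geometric multiplicity of an eigenvalue is at most its algebraic multiplicity. -/

theorem Matrix.map_ofReal_mulVec_eq_self {ι : Type*} [Fintype ι] {M : Matrix ι ι ℝ} {u w : ι → ℝ}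
    (hu : M *ᵥ u = u) (hw : M *ᵥ w = w) {v : ι → ℂ} (hv : ∀ i, v i = ⟨u i, w i⟩) :
    M.map (fun x : ℝ => (x : ℂ)) *ᵥ v = v := by
  funext i
  apply Complex.ext
  · simpa [mulVec, dotProduct, Complex.re_sum, hv] using congrFun hu i
  · simpa [mulVec, dotProduct, Complex.im_sum, hv] using congrFun hw i

theorem Matrix.finrank_le_rootMultiplicity_charpoly {K V ι : Type*} [Field K] [AddCommGroup V]
    [Module K V] [Fintype ι] [DecidableEq ι] (M : Matrix ι ι K) (μ : K) (f : V →ₗ[K] ι → K)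
    (hf : Function.Injective f) (hfix : ∀ v, M *ᵥ f v = μ • f v) :
    Module.finrank K V ≤ M.charpoly.rootMultiplicity μ := by
  have hrange : LinearMap.range f ≤ Module.End.eigenspace (toLin' M) μ := by
    rintro _ ⟨v, rfl⟩
    simpa [Module.End.mem_eigenspace_iff] using hfix v
  calc Module.finrank K V = Module.finrank K (LinearMap.range f) :=
        (LinearMap.finrank_range_of_inj hf).symm
    _ ≤ Module.finrank K (Module.End.eigenspace (toLin' M) μ) := Submodule.finrank_mono hrange
    _ ≤ (toLin' M).charpoly.rootMultiplicity μ := LinearMap.finrank_eigenspace_le _ μ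
    _ = M.charpoly.rootMultiplicity μ := by rw [Matrix.charpoly_toLin']

theorem Matrix.vecMul_injective_of_rank_eq_card {K m n : Type*} [Field K] [Fintype m] [Fintype n]
    (C : Matrix m n K) (hC : C.rank = Fintype.card m) : Function.Injective C.vecMul := by
  rw [vecMul_injective_iff, linearIndependent_iff_card_eq_finrank_span, ← hC,
    rank_eq_finrank_span_row]
  rfl

theorem blk3_mulVec {n m l : ℕ} (M11 : Matrix (Fin n) (Fin n) ℝ) (M12 : Matrix (Fin n) (Fin m) ℝ)
    (M13 : Matrix (Fin n) (Fin l) ℝ) (M21 : Matrix (Fin m) (Fin n) ℝ)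
    (M22 : Matrix (Fin m) (Fin m) ℝ) (M23 : Matrix (Fin m) (Fin l) ℝ)
    (M31 : Matrix (Fin l) (Fin n) ℝ) (M32 : Matrix (Fin l) (Fin m) ℝ)
    (M33 : Matrix (Fin l) (Fin l) ℝ) (x : Fin n → ℝ) (y : Fin m → ℝ) (z : Fin l → ℝ) :
    blk3 M11 M12 M13 M21 M22 M23 M31 M32 M33 *ᵥ Sum.elim x (Sum.elim y z) =
      Sum.elim (M11 *ᵥ x + M12 *ᵥ y + M13 *ᵥ z)
        (Sum.elim (M21 *ᵥ x + M22 *ᵥ y + M23 *ᵥ z) (M31 *ᵥ x + M32 *ᵥ y + M33 *ᵥ z)) := by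
  ext (i | j | k) <;> simp [blk3, fromBlocks_mulVec, fromRows_mulVec, add_assoc]

section SaddlePoint

variable {n m l : ℕ}

def fixedVec (S : Matrix (Fin m) (Fin m) ℝ) (B : Matrix (Fin m) (Fin n) ℝ) :
    (Fin n → ℝ) × (Fin l → ℝ) →ₗ[ℝ] (Fin n ⊕ (Fin m ⊕ Fin l) → ℝ) where
  toFun p := Sum.elim p.1 (Sum.elim (-(S⁻¹ * B) *ᵥ p.1) p.2)
  map_add' p q := by ext (i | j | k) <;> simp [mulVec_add]
  map_smul' c p := by ext (i | j | k) <;> simp [mulVec_smul]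

theorem fixedVec_injective (S : Matrix (Fin m) (Fin m) ℝ) (B : Matrix (Fin m) (Fin n) ℝ) :
    Function.Injective (fixedVec (l := l) S B) := by
  intro p q h
  ext i
  · exact congrFun h (Sum.inl i)
  · exact congrFun h (Sum.inr (Sum.inr i))

theorem saddle_mulVec_fixedVec (A : Matrix (Fin n) (Fin n) ℝ) (B : Matrix (Fin m) (Fin n) ℝ)
    {S : Matrix (Fin m) (Fin m) ℝ} (C : Matrix (Fin l) (Fin m) ℝ) (hS : IsUnit S.det)
    (p : (Fin n → ℝ) × (Fin l → ℝ)) :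
    blk3 A Bᵀ 0 (-B) 0 (-Cᵀ) 0 C 0 *ᵥ fixedVec S B p =
      blk3 A Bᵀ 0 0 S (-Cᵀ) 0 C 0 *ᵥ fixedVec S B p := by
  have hSB : S *ᵥ ((S⁻¹ * B) *ᵥ p.1) = B *ᵥ p.1 := by
    rw [mulVec_mulVec, mul_nonsing_inv_cancel_left _ _ hS]
  simp [fixedVec, blk3_mulVec, neg_mulVec, mulVec_neg, hSB]

theorem isUnit_det_precond {A : Matrix (Fin n) (Fin n) ℝ} (B : Matrix (Fin m) (Fin n) ℝ)
    {S : Matrix (Fin m) (Fin m) ℝ} {C : Matrix (Fin l) (Fin m) ℝ} (hA : IsUnit A.det)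
    (hS : S.PosDef) (hC : C.rank = l) :
    IsUnit (blk3 A Bᵀ 0 0 S (-Cᵀ) 0 C 0).det := by
  have hSdet : IsUnit S.det := hS.det_pos.ne'.isUnit
  have : Invertible S := S.invertibleOfIsUnitDet hSdet
  have hSchur : (C * S⁻¹ * Cᵀ).PosDef := by
    simpa using
      hS.inv.mul_mul_conjTranspose_same (C.vecMul_injective_of_rank_eq_card (by simpa using hC))
  rw [blk3, fromRows_zero, det_fromBlocks_zero₂₁, det_fromBlocks₁₁, invOf_eq_nonsing_inv]
  simpa using hA.mul (hSdet.mul hSchur.det_pos.ne'.isUnit)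

theorem precond_inv_mul_saddle_mulVec_fixedVec {A : Matrix (Fin n) (Fin n) ℝ}
    (B : Matrix (Fin m) (Fin n) ℝ) {S : Matrix (Fin m) (Fin m) ℝ} {C : Matrix (Fin l) (Fin m) ℝ}
    (hA : IsUnit A.det) (hS : S.PosDef) (hC : C.rank = l) (p : (Fin n → ℝ) × (Fin l → ℝ)) :
    ((blk3 A Bᵀ 0 0 S (-Cᵀ) 0 C 0)⁻¹ * blk3 A Bᵀ 0 (-B) 0 (-Cᵀ) 0 C 0) *ᵥ fixedVec S B p =
      fixedVec S B p := by
  rw [← mulVec_mulVec, saddle_mulVec_fixedVec A B C hS.det_pos.ne'.isUnit, mulVec_mulVec,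
    nonsing_inv_mul _ (isUnit_det_precond B hA hS hC), one_mulVec]

end SaddlePoint

theorem stmt12_general {n m l : ℕ} (A : Matrix (Fin n) (Fin n) ℝ) (B : Matrix (Fin m) (Fin n) ℝ)
    (S : Matrix (Fin m) (Fin m) ℝ) (C : Matrix (Fin l) (Fin m) ℝ)
    (hA : A.PosDef) (hS : S.PosDef) (hC : C.rank = l) :
    (∀ (x : Fin n → ℝ) (z : Fin l → ℂ), (x ≠ 0 ∨ z ≠ 0) →
      (Sum.elim (fun i => (x i : ℂ))
          (Sum.elim (fun j => (((-(S⁻¹ * B)) *ᵥ x) j : ℂ)) z) : Fin n ⊕ (Fin m ⊕ Fin l) → ℂ) ≠ 0 ∧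
      (((blk3 A Bᵀ 0 0 S (-Cᵀ) 0 C 0)⁻¹ * blk3 A Bᵀ 0 (-B) 0 (-Cᵀ) 0 C 0).map
          (fun x : ℝ => (x : ℂ))) *ᵥ
        (Sum.elim (fun i => (x i : ℂ)) (Sum.elim (fun j => (((-(S⁻¹ * B)) *ᵥ x) j : ℂ)) z)) =
      (1 : ℂ) • Sum.elim (fun i => (x i : ℂ)) (Sum.elim (fun j => (((-(S⁻¹ * B)) *ᵥ x) j : ℂ)) z)) ∧
    n + l ≤ (((blk3 A Bᵀ 0 0 S (-Cᵀ) 0 C 0)⁻¹ *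
        blk3 A Bᵀ 0 (-B) 0 (-Cᵀ) 0 C 0).charpoly).rootMultiplicity 1 := by
  have hfix := precond_inv_mul_saddle_mulVec_fixedVec B hA.det_pos.ne'.isUnit hS hC
  refine ⟨fun x z hxz => ⟨fun h => ?_, ?_⟩, ?_⟩
  · rcases hxz with hx | hz
    · exact hx (funext fun i => by simpa using congrFun h (Sum.inl i))
    · exact hz (funext fun k => congrFun h (Sum.inr (Sum.inr k)))
  · rw [one_smul]
    refine map_ofReal_mulVec_eq_self (hfix (x, fun k => (z k).re)) (hfix (0, fun k => (z k).im))
      fun i => ?_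
    rcases i with i | j | k <;> apply Complex.ext <;> simp [fixedVec]
  · simpa using finrank_le_rootMultiplicity_charpoly _ 1 _ (fixedVec_injective S B)
      (by simpa using hfix)

theorem stmt12 {n m l : ℕ} (A : Matrix (Fin n) (Fin n) ℝ) (B : Matrix (Fin m) (Fin n) ℝ)
    (S : Matrix (Fin m) (Fin m) ℝ) (C : Matrix (Fin l) (Fin m) ℝ)
    (hA : A.PosDef) (hS : S.PosDef) (hB : B.rank = m) (hC : C.rank = l) :
    (∀ (x : Fin n → ℝ) (z : Fin l → ℂ), (x ≠ 0 ∨ z ≠ 0) →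
      (Sum.elim (fun i => (x i : ℂ))
          (Sum.elim (fun j => (((-(S⁻¹ * B)) *ᵥ x) j : ℂ)) z) : Fin n ⊕ (Fin m ⊕ Fin l) → ℂ) ≠ 0 ∧
      (((blk3 A Bᵀ 0 0 S (-Cᵀ) 0 C 0)⁻¹ * blk3 A Bᵀ 0 (-B) 0 (-Cᵀ) 0 C 0).map
          (fun x : ℝ => (x : ℂ))) *ᵥ
        (Sum.elim (fun i => (x i : ℂ)) (Sum.elim (fun j => (((-(S⁻¹ * B)) *ᵥ x) j : ℂ)) z)) =
      (1 : ℂ) • Sum.elim (fun i => (x i : ℂ)) (Sum.elim (fun j => (((-(S⁻¹ * B)) *ᵥ x) j : ℂ)) z)) ∧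
    n + l ≤ (((blk3 A Bᵀ 0 0 S (-Cᵀ) 0 C 0)⁻¹ *
        blk3 A Bᵀ 0 (-B) 0 (-Cᵀ) 0 C 0).charpoly).rootMultiplicity 1 :=
  stmt12_general A B S C hA hS hC
end
end

section
/- Every non-unit eigenvalue λ of 𝒫⁻¹ℬ satisfies λ_min(B A⁻¹ Bᵀ)/λ_max(S) ≤ λ ≤ λ_max(B A⁻¹ Bᵀ)/λ_min(S), and all such eigenvalues are positive. -/
open Matrix

noncomputable section

section Helpers14
set_option linter.unusedSectionVars false

variable {p q r : Type*} [Fintype p] [Fintype q] [Fintype r]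

private lemma mapC_mul (M : Matrix p q ℝ) (N : Matrix q r ℝ) :
    (M * N).map (fun x : ℝ => (x : ℂ)) =
      M.map (fun x : ℝ => (x : ℂ)) * N.map (fun x : ℝ => (x : ℂ)) := by
  ext i j; simp [Matrix.mul_apply]

private lemma mapC_one [DecidableEq p] :
    (1 : Matrix p p ℝ).map (fun x : ℝ => (x : ℂ)) = 1 := by
  ext i j; simp [Matrix.one_apply, apply_ite]

private lemma mapC_zero : (0 : Matrix p q ℝ).map (fun x : ℝ => (x : ℂ)) = 0 := by
  ext i j; simp

private lemma mapC_neg (M : Matrix p q ℝ) :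
    (-M).map (fun x : ℝ => (x : ℂ)) = -(M.map (fun x : ℝ => (x : ℂ))) := by
  ext i j; simp

private lemma mulVec_eq_zero_of_rank (M : Matrix p q ℝ) (h : M.rank = Fintype.card q)
    {z : q → ℝ} (hz : M *ᵥ z = 0) : z = 0 := by
  have hker : LinearMap.ker M.mulVecLin = ⊥ := by
    have h1 := LinearMap.finrank_range_add_finrank_ker M.mulVecLin
    rw [Module.finrank_fintype_fun_eq_card] at h1
    rw [Submodule.finrank_eq_zero.symm]
    have : M.rank = Module.finrank ℝ (LinearMap.range M.mulVecLin) := rfl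
    omega
  have : z ∈ LinearMap.ker M.mulVecLin := by simpa [Matrix.mulVecLin_apply] using hz
  simpa [hker] using this

private lemma posDef_conj [DecidableEq p] [DecidableEq q] (M : Matrix q q ℝ) (hM : M.PosDef)
    (B : Matrix p q ℝ) (hB : ∀ x, Bᵀ *ᵥ x = 0 → x = 0) : (B * M * Bᵀ).PosDef := by
  refine Matrix.PosDef.of_dotProduct_mulVec_pos ?_ ?_
  · show (B * M * Bᵀ)ᴴ = _
    calc (B * M * Bᵀ)ᴴ = Bᵀᴴ * Mᴴ * Bᴴ := by
          rw [conjTranspose_mul, conjTranspose_mul, ← Matrix.mul_assoc]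
      _ = B * M * Bᵀ := by
          rw [hM.1.eq, conjTranspose_eq_transpose_of_trivial,
            conjTranspose_eq_transpose_of_trivial, transpose_transpose]
  · intro x hx
    have hw : Bᵀ *ᵥ x ≠ 0 := fun h => hx (hB x h)
    have := hM.dotProduct_mulVec_pos hw
    simpa [← mulVec_mulVec, dotProduct_mulVec, mulVec_transpose] using this

private lemma quad_re (M : Matrix p p ℝ) (y : p → ℂ) :
    (star y ⬝ᵥ (M.map (fun x : ℝ => (x : ℂ)) *ᵥ y)).re =
      (fun i => (y i).re) ⬝ᵥ (M *ᵥ fun i => (y i).re) +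
      (fun i => (y i).im) ⬝ᵥ (M *ᵥ fun i => (y i).im) := by
  simp only [dotProduct, mulVec, Complex.re_sum, ← Finset.sum_add_distrib]
  refine Finset.sum_congr rfl fun i _ => ?_
  simp only [Pi.star_apply, Complex.star_def, Complex.mul_re, Complex.conj_re, Complex.conj_im,
    Complex.re_sum, Complex.im_sum, Complex.mul_im, Complex.ofReal_re,
    Complex.ofReal_im, Matrix.map_apply, Finset.mul_sum]
  ring_nf
  rw [← Finset.sum_add_distrib]
  refine Finset.sum_congr rfl fun j _ => by ring

private lemma quad_im (M : Matrix p p ℝ) (hM : Mᵀ = M) (y : p → ℂ) :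
    (star y ⬝ᵥ (M.map (fun x : ℝ => (x : ℂ)) *ᵥ y)).im = 0 := by
  have key : ∀ a b : p → ℝ, a ⬝ᵥ (M *ᵥ b) = b ⬝ᵥ (M *ᵥ a) := fun a b => by
    rw [dotProduct_mulVec, ← mulVec_transpose, hM, dotProduct_comm]
  have h2 : (star y ⬝ᵥ (M.map (fun x : ℝ => (x : ℂ)) *ᵥ y)).im =
      (fun i => (y i).re) ⬝ᵥ (M *ᵥ fun i => (y i).im) -
      (fun i => (y i).im) ⬝ᵥ (M *ᵥ fun i => (y i).re) := by
    simp only [dotProduct, mulVec, Complex.im_sum, ← Finset.sum_sub_distrib]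
    refine Finset.sum_congr rfl fun i _ => ?_
    simp only [Pi.star_apply, Complex.star_def, Complex.mul_im, Complex.conj_re, Complex.conj_im,
      Complex.re_sum, Complex.im_sum, Complex.mul_re, Complex.ofReal_re,
      Complex.ofReal_im, Matrix.map_apply, Finset.mul_sum]
    ring_nf
    rw [← Finset.sum_sub_distrib]
    refine Finset.sum_congr rfl fun j _ => by ring
  rw [h2, key, sub_self]

private lemma mapC_mulVec_star (M : Matrix p q ℝ) (y : q → ℂ) :
    M.map (fun x : ℝ => (x : ℂ)) *ᵥ (star y) = star (M.map (fun x : ℝ => (x : ℂ)) *ᵥ y) := by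
  ext i
  simp only [mulVec, dotProduct, Pi.star_apply, star_sum, Matrix.map_apply]
  refine Finset.sum_congr rfl fun j _ => ?_
  simp [star_mul', Complex.star_def, Complex.conj_ofReal]

private lemma mapC_mulVec_re_im (M : Matrix p q ℝ) {z : q → ℂ}
    (h : M.map (fun x : ℝ => (x : ℂ)) *ᵥ z = 0) :
    M *ᵥ (fun j => (z j).re) = 0 ∧ M *ᵥ (fun j => (z j).im) = 0 := by
  constructor
  · funext i
    have h1 := congrArg Complex.re (congrFun h i)
    simpa [mulVec, dotProduct, Complex.re_sum, Matrix.map_apply] using h1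
  · funext i
    have h1 := congrArg Complex.im (congrFun h i)
    simpa [mulVec, dotProduct, Complex.im_sum, Matrix.map_apply] using h1

private lemma rayleigh [DecidableEq p] [Nonempty p] (M : Matrix p p ℝ) (hM : M.IsHermitian)
    (x : p → ℝ) :
    (⨅ i, hM.eigenvalues i) * (x ⬝ᵥ x) ≤ x ⬝ᵥ (M *ᵥ x) ∧
      x ⬝ᵥ (M *ᵥ x) ≤ (⨆ i, hM.eigenvalues i) * (x ⬝ᵥ x) := by
  set U : Matrix p p ℝ := (hM.eigenvectorUnitary : Matrix p p ℝ) with hU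
  set w : p → ℝ := star U *ᵥ x with hw
  have hUU : U * star U = 1 := mem_unitaryGroup_iff.mp hM.eigenvectorUnitary.2
  have hdot : ∀ u : p → ℝ, x ⬝ᵥ (U *ᵥ u) = w ⬝ᵥ u := by
    intro u
    rw [dotProduct_mulVec, hw, star_eq_conjTranspose, conjTranspose_eq_transpose_of_trivial,
      mulVec_transpose]
  have hqu : x ⬝ᵥ (M *ᵥ x) = ∑ i, hM.eigenvalues i * (w i * w i) := by
    have hM' : M = U * diagonal (RCLike.ofReal ∘ hM.eigenvalues) * star U := hM.spectral_theorem
    have hMx : M *ᵥ x = U *ᵥ (diagonal (RCLike.ofReal ∘ hM.eigenvalues) *ᵥ w) := by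
      rw [hw, mulVec_mulVec, mulVec_mulVec, ← hM']
    rw [hMx, hdot]
    simp only [RCLike.ofReal_real_eq_id, Function.comp_def, id_eq, dotProduct, mulVec_diagonal]
    exact Finset.sum_congr rfl fun i _ => by ring
  have hxx : x ⬝ᵥ x = ∑ i, w i * w i := by
    have h1 : x = U *ᵥ w := by
      rw [hw, mulVec_mulVec, hUU, one_mulVec]
    have h2 : x ⬝ᵥ x = x ⬝ᵥ (U *ᵥ w) := congrArg (fun t => x ⬝ᵥ t) h1
    rw [h2, hdot w]
    rfl
  constructor
  · rw [hqu, hxx, Finset.mul_sum]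
    exact Finset.sum_le_sum fun i _ => mul_le_mul_of_nonneg_right
      (ciInf_le (Finite.bddBelow_range _) i) (mul_self_nonneg _)
  · rw [hqu, hxx, Finset.mul_sum]
    exact Finset.sum_le_sum fun i _ => mul_le_mul_of_nonneg_right
      (le_ciSup (Finite.bddAbove_range _) i) (mul_self_nonneg _)

private lemma fromColumns_mapC {p q1 q2 : Type*} (A : Matrix p q1 ℝ) (B : Matrix p q2 ℝ) :
    (fromCols A B).map (fun x : ℝ => (x : ℂ)) =
      fromCols (A.map (fun x : ℝ => (x : ℂ))) (B.map (fun x : ℝ => (x : ℂ))) := by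
  ext i j; cases j <;> rfl

private lemma fromRows_mapC {p1 p2 q : Type*} (A : Matrix p1 q ℝ) (B : Matrix p2 q ℝ) :
    (fromRows A B).map (fun x : ℝ => (x : ℂ)) =
      fromRows (A.map (fun x : ℝ => (x : ℂ))) (B.map (fun x : ℝ => (x : ℂ))) := by
  ext i j; cases i <;> rfl

private lemma blk3_mapC_mulVec {n m l : ℕ} (M11 : Matrix (Fin n) (Fin n) ℝ)
    (M12 : Matrix (Fin n) (Fin m) ℝ) (M13 : Matrix (Fin n) (Fin l) ℝ)
    (M21 : Matrix (Fin m) (Fin n) ℝ) (M22 : Matrix (Fin m) (Fin m) ℝ)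
    (M23 : Matrix (Fin m) (Fin l) ℝ) (M31 : Matrix (Fin l) (Fin n) ℝ)
    (M32 : Matrix (Fin l) (Fin m) ℝ) (M33 : Matrix (Fin l) (Fin l) ℝ)
    (x : Fin n → ℂ) (y : Fin m → ℂ) (z : Fin l → ℂ) :
    ((blk3 M11 M12 M13 M21 M22 M23 M31 M32 M33).map (fun t : ℝ => (t : ℂ))) *ᵥ
        Sum.elim x (Sum.elim y z) =
      Sum.elim
        (M11.map (fun t : ℝ => (t : ℂ)) *ᵥ x +
          (M12.map (fun t : ℝ => (t : ℂ)) *ᵥ y + M13.map (fun t : ℝ => (t : ℂ)) *ᵥ z))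
        (Sum.elim
          (M21.map (fun t : ℝ => (t : ℂ)) *ᵥ x +
            (M22.map (fun t : ℝ => (t : ℂ)) *ᵥ y + M23.map (fun t : ℝ => (t : ℂ)) *ᵥ z))
          (M31.map (fun t : ℝ => (t : ℂ)) *ᵥ x +
            (M32.map (fun t : ℝ => (t : ℂ)) *ᵥ y + M33.map (fun t : ℝ => (t : ℂ)) *ᵥ z))) := by
  unfold blk3
  rw [fromBlocks_map, fromColumns_mapC, fromRows_mapC, fromBlocks_map, fromBlocks_mulVec]
  simp only [Sum.elim_comp_inl, Sum.elim_comp_inr]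
  rw [fromCols_mulVec_sumElim, fromRows_mulVec, fromBlocks_mulVec]
  simp only [Sum.elim_comp_inl, Sum.elim_comp_inr]
  funext i
  rcases i with i | (i | i) <;> simp

private lemma P_isUnit_det {n m l : ℕ} (A : Matrix (Fin n) (Fin n) ℝ)
    (B : Matrix (Fin m) (Fin n) ℝ) (S : Matrix (Fin m) (Fin m) ℝ)
    (C : Matrix (Fin l) (Fin m) ℝ) (hA : A.PosDef) (hS : S.PosDef)
    (hC : ∀ x, Cᵀ *ᵥ x = 0 → x = 0) :
    IsUnit (blk3 A Bᵀ 0 0 S (-Cᵀ) 0 C 0).det := by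
  unfold blk3
  have h0 : (fromRows (0 : Matrix (Fin m) (Fin n) ℝ) (0 : Matrix (Fin l) (Fin n) ℝ)) = 0 := by
    ext i j; cases i <;> rfl
  rw [h0, det_fromBlocks_zero₂₁]
  haveI := hS.isUnit.invertible
  rw [det_fromBlocks₁₁]
  have hCSC : (C * S⁻¹ * Cᵀ).PosDef := posDef_conj S⁻¹ hS.inv C hC
  have hsimp : (0 : Matrix (Fin l) (Fin l) ℝ) - C * ⅟S * (-Cᵀ) = C * S⁻¹ * Cᵀ := by
    rw [Matrix.mul_neg, zero_sub, neg_neg, invOf_eq_nonsing_inv]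
  rw [hsimp]
  refine isUnit_iff_ne_zero.mpr ?_
  have := hA.det_pos
  have := hS.det_pos
  have := hCSC.det_pos
  positivity

private lemma dot_self_pos {u : p → ℝ} (hu : u ≠ 0) : 0 < u ⬝ᵥ u := by
  obtain ⟨j, hj⟩ := Function.ne_iff.mp hu
  have h1 : u j * u j ≤ u ⬝ᵥ u :=
    Finset.single_le_sum (fun i _ => mul_self_nonneg (u i)) (Finset.mem_univ j)
  exact lt_of_lt_of_le (mul_self_pos.mpr hj) h1

end Helpers14

theorem stmt14 {n m l : ℕ} (A : Matrix (Fin n) (Fin n) ℝ) (B : Matrix (Fin m) (Fin n) ℝ)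
    (S : Matrix (Fin m) (Fin m) ℝ) (C : Matrix (Fin l) (Fin m) ℝ)
    (hA : A.PosDef) (hS : S.PosDef) (hB : B.rank = m) (hC : C.rank = l)
    (hH : (B * A⁻¹ * Bᵀ).IsHermitian) :
    ∀ μ : ℂ, IsEig ((blk3 A Bᵀ 0 0 S (-Cᵀ) 0 C 0)⁻¹ * blk3 A Bᵀ 0 (-B) 0 (-Cᵀ) 0 C 0) μ →
      μ ≠ 1 →
      μ.im = 0 ∧ 0 < μ.re ∧
      (⨅ i, hH.eigenvalues i) / (⨆ i, hS.1.eigenvalues i) ≤ μ.re ∧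
      μ.re ≤ (⨆ i, hH.eigenvalues i) / (⨅ i, hS.1.eigenvalues i) := by
  intro μ hEig hμ1
  obtain ⟨v, hv0, hveq⟩ := hEig
  -- injectivity facts
  have hBt_inj : ∀ x : Fin m → ℝ, Bᵀ *ᵥ x = 0 → x = 0 := by
    intro x hx
    exact mulVec_eq_zero_of_rank Bᵀ (by rw [B.rank_transpose, hB, Fintype.card_fin]) hx
  have hCt_inj : ∀ x : Fin l → ℝ, Cᵀ *ᵥ x = 0 → x = 0 := by
    intro x hx
    exact mulVec_eq_zero_of_rank Cᵀ (by rw [C.rank_transpose, hC, Fintype.card_fin]) hx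
  set H : Matrix (Fin m) (Fin m) ℝ := B * A⁻¹ * Bᵀ with hHdef
  have hHPD : H.PosDef := posDef_conj A⁻¹ hA.inv B hBt_inj
  set P := blk3 A Bᵀ 0 0 S (-Cᵀ) 0 C 0 with hPdef
  set Bm := blk3 A Bᵀ 0 (-B) 0 (-Cᵀ) 0 C 0 with hBmdef
  have hPdet : IsUnit P.det := P_isUnit_det A B S C hA hS hCt_inj
  have hPB : P * (P⁻¹ * Bm) = Bm := by
    rw [← Matrix.mul_assoc, Matrix.mul_nonsing_inv _ hPdet, Matrix.one_mul]
  have hmap : Bm.map (fun t : ℝ => (t : ℂ)) *ᵥ v = μ • (P.map (fun t : ℝ => (t : ℂ)) *ᵥ v) := by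
    conv_lhs => rw [← hPB, mapC_mul, ← mulVec_mulVec, hveq]
    rw [mulVec_smul]
  -- decompose v
  set x : Fin n → ℂ := fun i => v (Sum.inl i) with hxdef
  set y : Fin m → ℂ := fun i => v (Sum.inr (Sum.inl i)) with hydef
  set z : Fin l → ℂ := fun i => v (Sum.inr (Sum.inr i)) with hzdef
  have hv : v = Sum.elim x (Sum.elim y z) := by
    funext i; rcases i with i | (i | i) <;> rfl
  rw [hv, hBmdef, hPdef, blk3_mapC_mulVec, blk3_mapC_mulVec] at hmap
  simp only [mapC_zero, mapC_neg, Matrix.zero_mulVec, Matrix.neg_mulVec, add_zero, zero_add] at hmap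
  -- the three block equations
  have e1 : (A.map (fun t : ℝ => (t : ℂ)) *ᵥ x + Bᵀ.map (fun t : ℝ => (t : ℂ)) *ᵥ y) =
      μ • (A.map (fun t : ℝ => (t : ℂ)) *ᵥ x + Bᵀ.map (fun t : ℝ => (t : ℂ)) *ᵥ y) := by
    funext i
    have h := congrFun hmap (Sum.inl i)
    simpa using h
  have e2 : (-(B.map (fun t : ℝ => (t : ℂ)) *ᵥ x) + -(Cᵀ.map (fun t : ℝ => (t : ℂ)) *ᵥ z)) =
      μ • (S.map (fun t : ℝ => (t : ℂ)) *ᵥ y + -(Cᵀ.map (fun t : ℝ => (t : ℂ)) *ᵥ z)) := by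
    funext i
    have h := congrFun hmap (Sum.inr (Sum.inl i))
    simpa using h
  have e3 : (C.map (fun t : ℝ => (t : ℂ)) *ᵥ y) = μ • (C.map (fun t : ℝ => (t : ℂ)) *ᵥ y) := by
    funext i
    have h := congrFun hmap (Sum.inr (Sum.inr i))
    simpa using h
  have hone : (1 : ℂ) - μ ≠ 0 := sub_ne_zero.mpr (Ne.symm hμ1)
  have fix : ∀ (k : Type) [Fintype k] (w : k → ℂ), w = μ • w → w = 0 := by
    intro k _ w hw
    funext i
    have h := congrFun hw i
    have h2 : (1 - μ) * w i = 0 := by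
      simp only [Pi.smul_apply, smul_eq_mul] at h
      rw [sub_mul, one_mul, ← h, sub_self]
    rcases mul_eq_zero.mp h2 with h3 | h3
    · exact absurd h3 hone
    · exact h3
  have hABy : A.map (fun t : ℝ => (t : ℂ)) *ᵥ x + Bᵀ.map (fun t : ℝ => (t : ℂ)) *ᵥ y = 0 :=
    fix _ _ e1
  have hCy : C.map (fun t : ℝ => (t : ℂ)) *ᵥ y = 0 := fix _ _ e3
  -- A is invertible (over ℂ after mapping)
  have hAinv : (A⁻¹.map (fun t : ℝ => (t : ℂ))) * (A.map (fun t : ℝ => (t : ℂ))) = 1 := by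
    rw [← mapC_mul, Matrix.nonsing_inv_mul A (isUnit_iff_ne_zero.mpr hA.det_pos.ne'), mapC_one]
  have hx : x = A⁻¹.map (fun t : ℝ => (t : ℂ)) *ᵥ (-(Bᵀ.map (fun t : ℝ => (t : ℂ)) *ᵥ y)) := by
    have h1 : A.map (fun t : ℝ => (t : ℂ)) *ᵥ x = -(Bᵀ.map (fun t : ℝ => (t : ℂ)) *ᵥ y) :=
      eq_neg_of_add_eq_zero_left hABy
    rw [← h1, mulVec_mulVec, hAinv, one_mulVec]
  have hBx : B.map (fun t : ℝ => (t : ℂ)) *ᵥ x = -(H.map (fun t : ℝ => (t : ℂ)) *ᵥ y) := by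
    rw [hx, mulVec_neg, mulVec_mulVec, mulVec_neg, mulVec_mulVec, ← Matrix.mul_assoc,
      ← mapC_mul, ← mapC_mul, ← hHdef]
  -- y ≠ 0
  have hy : y ≠ 0 := by
    intro hy0
    have hx0 : x = 0 := by
      rw [hx, hy0]
      simp
    have hCz : Cᵀ.map (fun t : ℝ => (t : ℂ)) *ᵥ z = 0 := by
      have h1 : -(Cᵀ.map (fun t : ℝ => (t : ℂ)) *ᵥ z) =
          μ • (-(Cᵀ.map (fun t : ℝ => (t : ℂ)) *ᵥ z)) := by
        have := e2
        rw [hx0, hy0] at this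
        simpa using this
      have h2 := fix _ _ h1
      simpa [neg_eq_zero] using h2
    have hz0 : z = 0 := by
      obtain ⟨hre, him⟩ := mapC_mulVec_re_im Cᵀ hCz
      have h1 := hCt_inj _ hre
      have h2 := hCt_inj _ him
      funext i
      have := congrFun h1 i
      have := congrFun h2 i
      exact Complex.ext (congrFun h1 i) (congrFun h2 i)
    apply hv0
    rw [hv, hx0, hy0, hz0]
    funext i; rcases i with i | (i | i) <;> rfl
  -- key scalar equation
  have hkey : star y ⬝ᵥ (H.map (fun t : ℝ => (t : ℂ)) *ᵥ y) =
      μ * (star y ⬝ᵥ (S.map (fun t : ℝ => (t : ℂ)) *ᵥ y)) := by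
    have hdz : star y ⬝ᵥ (Cᵀ.map (fun t : ℝ => (t : ℂ)) *ᵥ z) = 0 := by
      rw [dotProduct_mulVec]
      have h1 : star y ᵥ* Cᵀ.map (fun t : ℝ => (t : ℂ)) = 0 := by
        have htr : Cᵀ.map (fun t : ℝ => (t : ℂ)) = (C.map (fun t : ℝ => (t : ℂ)))ᵀ := by
          ext i j; rfl
        rw [htr, vecMul_transpose, mapC_mulVec_star, hCy, star_zero]
      rw [h1, zero_dotProduct]
    have h2 := congrArg (fun u => star y ⬝ᵥ u) e2
    simp only [dotProduct_add, dotProduct_neg, dotProduct_smul, smul_eq_mul] at h2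
    rw [hBx, hdz] at h2
    simp only [neg_neg, dotProduct_neg, hdz, dotProduct_smul] at h2
    -- h2 : star y ⬝ᵥ (Hc *ᵥ y) + -0 = μ * (star y ⬝ᵥ (Sc *ᵥ y) + -0)
    simpa [mul_add] using h2
  -- real and positive quantities
  have hHsymm : Hᵀ = H := by
    rw [← conjTranspose_eq_transpose_of_trivial]
    exact hH.eq
  have hSsymm : Sᵀ = S := by
    rw [← conjTranspose_eq_transpose_of_trivial]
    exact hS.1.eq
  set a : Fin m → ℝ := fun i => (y i).re with hadef
  set b : Fin m → ℝ := fun i => (y i).im with hbdef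
  have hab : a ≠ 0 ∨ b ≠ 0 := by
    obtain ⟨i, hi⟩ := Function.ne_iff.mp hy
    by_contra hcon
    push_neg at hcon
    apply hi
    have h1 := congrFun hcon.1 i
    have h2 := congrFun hcon.2 i
    exact Complex.ext h1 h2
  haveI : Nonempty (Fin m) := by
    obtain ⟨i, _⟩ := Function.ne_iff.mp hy
    exact ⟨i⟩
  set qre := a ⬝ᵥ (H *ᵥ a) + b ⬝ᵥ (H *ᵥ b) with hqredef
  set sre := a ⬝ᵥ (S *ᵥ a) + b ⬝ᵥ (S *ᵥ b) with hsredef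
  have hq : star y ⬝ᵥ (H.map (fun t : ℝ => (t : ℂ)) *ᵥ y) = (qre : ℂ) := by
    refine Complex.ext ?_ ?_
    · rw [quad_re]; simp [hqredef, hadef, hbdef]
    · rw [quad_im H hHsymm]; simp
  have hs : star y ⬝ᵥ (S.map (fun t : ℝ => (t : ℂ)) *ᵥ y) = (sre : ℂ) := by
    refine Complex.ext ?_ ?_
    · rw [quad_re]; simp [hsredef, hadef, hbdef]
    · rw [quad_im S hSsymm]; simp
  have hposquad : ∀ (M : Matrix (Fin m) (Fin m) ℝ), M.PosDef →
      0 < a ⬝ᵥ (M *ᵥ a) + b ⬝ᵥ (M *ᵥ b) := by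
    intro M hM
    have hnn : ∀ u : Fin m → ℝ, 0 ≤ u ⬝ᵥ (M *ᵥ u) := by
      intro u
      have := hM.posSemidef.dotProduct_mulVec_nonneg u
      simpa using this
    rcases hab with ha | hb
    · have := hM.dotProduct_mulVec_pos ha
      simp only [star_trivial] at this
      exact add_pos_of_pos_of_nonneg this (hnn b)
    · have := hM.dotProduct_mulVec_pos hb
      simp only [star_trivial] at this
      exact add_pos_of_nonneg_of_pos (hnn a) this
  have hqre_pos : 0 < qre := hposquad H hHPD
  have hsre_pos : 0 < sre := hposquad S hS
  -- solve for μ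
  have hμ : μ = ((qre / sre : ℝ) : ℂ) := by
    have hs0 : (sre : ℂ) ≠ 0 := by
      exact_mod_cast hsre_pos.ne'
    rw [hq, hs] at hkey
    rw [Complex.ofReal_div]
    field_simp
    rw [hkey, mul_comm]
  have him : μ.im = 0 := by rw [hμ, Complex.ofReal_im]
  have hre : μ.re = qre / sre := by rw [hμ, Complex.ofReal_re]
  -- eigenvalue bounds
  set lamHmin := ⨅ i, hH.eigenvalues i with hlamHmin
  set lamHmax := ⨆ i, hH.eigenvalues i with hlamHmax
  set lamSmin := ⨅ i, hS.1.eigenvalues i with hlamSmin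
  set lamSmax := ⨆ i, hS.1.eigenvalues i with hlamSmax
  have hHeig_pos : ∀ i, 0 < hH.eigenvalues i := fun i => hHPD.eigenvalues_pos i
  have hSeig_pos : ∀ i, 0 < hS.1.eigenvalues i := fun i => hS.eigenvalues_pos i
  have hlamHmin_pos : 0 < lamHmin := by
    obtain ⟨i, hi⟩ := exists_eq_ciInf_of_finite (f := hH.eigenvalues)
    rw [hlamHmin, ← hi]; exact hHeig_pos i
  have hlamSmin_pos : 0 < lamSmin := by
    obtain ⟨i, hi⟩ := exists_eq_ciInf_of_finite (f := hS.1.eigenvalues)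
    rw [hlamSmin, ← hi]; exact hSeig_pos i
  have hlamSmax_pos : 0 < lamSmax := by
    obtain ⟨i, hi⟩ := exists_eq_ciSup_of_finite (f := hS.1.eigenvalues)
    exact lt_of_lt_of_le (hSeig_pos i) (le_of_eq hi)
  have hlamHmax_pos : 0 < lamHmax := by
    obtain ⟨i, hi⟩ := exists_eq_ciSup_of_finite (f := hH.eigenvalues)
    exact lt_of_lt_of_le (hHeig_pos i) (le_of_eq hi)
  set t := a ⬝ᵥ a + b ⬝ᵥ b with htdef
  have ht_pos : 0 < t := by
    have hnn : ∀ u : Fin m → ℝ, 0 ≤ u ⬝ᵥ u := fun u =>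
      Finset.sum_nonneg fun i _ => mul_self_nonneg (u i)
    rcases hab with ha | hb
    · exact add_pos_of_pos_of_nonneg (dot_self_pos ha) (hnn b)
    · exact add_pos_of_nonneg_of_pos (hnn a) (dot_self_pos hb)
  have hq_low : lamHmin * t ≤ qre := by
    rw [htdef, mul_add, hqredef]
    exact add_le_add (rayleigh H hH a).1 (rayleigh H hH b).1
  have hq_high : qre ≤ lamHmax * t := by
    rw [htdef, mul_add, hqredef]
    exact add_le_add (rayleigh H hH a).2 (rayleigh H hH b).2
  have hs_low : lamSmin * t ≤ sre := by
    rw [htdef, mul_add, hsredef]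
    exact add_le_add (rayleigh S hS.1 a).1 (rayleigh S hS.1 b).1
  have hs_high : sre ≤ lamSmax * t := by
    rw [htdef, mul_add, hsredef]
    exact add_le_add (rayleigh S hS.1 a).2 (rayleigh S hS.1 b).2
  refine ⟨him, ?_, ?_, ?_⟩
  · rw [hre]
    exact div_pos hqre_pos hsre_pos
  · rw [hre, ← mul_div_mul_right lamHmin lamSmax ht_pos.ne']
    exact div_le_div₀ hqre_pos.le hq_low hsre_pos hs_high
  · rw [hre, ← mul_div_mul_right lamHmax lamSmin ht_pos.ne']
    exact div_le_div₀ (by positivity) hq_high (mul_pos hlamSmin_pos ht_pos) hs_low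
end
end
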